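/- Let K_j be convex bodies in ℝ^n, all contained in a ball B_R, all with Gaussian volume γ_n(K_j) ≥ 1/2, and suppose K_j → K' in the Hausdorff metric where K' is a compact convex set containing the origin. Then the origin lies in the interior of K'. -/

import Mathlib

/-!
If `0` is a boundary point of the convex set `K'`, a nonzero functional `f` is `≤ 0` on `K'`.
Hausdorff convergence then puts `K j` inside `B_R ∩ {f ≤ r}` with `r → 0⁺`, and by continuity from
above these sets have Gaussian measure tending to that of `B_R ∩ {f ≤ 0}`. The latter is strictly
smaller than the Gaussian measure `1/2` of the half-space `{f ≤ 0}` (the symmetric Gaussian gives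
each closed half-space through `0` mass `1/2`, since hyperplanes are null), because the nonempty
open set `{f < 0} \ B_R` has positive mass. This contradicts `γ_n(K j) ≥ 1/2`.
-/

open MeasureTheory Real Filter

/-- The Gaussian volume `γ_n(K) = (1/(√(2π))ⁿ) ∫_K e^{-‖y‖²/2} dy`. -/
noncomputable def gaussianVolume {n : ℕ} (K : Set (EuclideanSpace ℝ (Fin n))) : ℝ :=
  (1 / (Real.sqrt (2 * π)) ^ n) * ∫ y in K, Real.exp (-‖y‖ ^ 2 / 2)

open Metric
open scoped ENNReal Topology

section Geometry

variable {E : Type*} [NormedAddCommGroup E] [NormedSpace ℝ E]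

theorem Convex.exists_ne_zero_forall_apply_nonpos_of_notMem_interior [FiniteDimensional ℝ E]
    {s : Set E} (hs : Convex ℝ s) (h0 : (0 : E) ∈ s) (h0s : (0 : E) ∉ interior s) :
    ∃ f : StrongDual ℝ E, f ≠ 0 ∧ ∀ y ∈ s, f y ≤ 0 := by
  rcases (interior s).eq_empty_or_nonempty with hint | hint
  · have hspan : Submodule.span ℝ s < ⊤ := by
      refine lt_top_iff_ne_top.2 fun htop => ?_
      have : vectorSpan ℝ s = ⊤ := by
        simpa [vectorSpan_eq_span_vsub_set_right ℝ h0] using htop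
      obtain ⟨y, hy⟩ := hs.interior_nonempty_iff_affineSpan_eq_top.2
        ((AffineSubspace.affineSpan_eq_top_iff_vectorSpan_eq_top_of_nonempty ℝ E E ⟨0, h0⟩).2 this)
      simp [hint] at hy
    obtain ⟨f, hf, hspan_le⟩ := (Submodule.span ℝ s).exists_le_ker_of_lt_top hspan
    refine ⟨LinearMap.toContinuousLinearMap f, by simpa using hf, fun y hy => ?_⟩
    exact (hspan_le (Submodule.subset_span hy)).le
  · simpa using geometric_hahn_banach_of_nonempty_interior_point hs h0s hint

theorem ContinuousLinearMap.apply_le_mul_infDist {f : StrongDual ℝ E} {t : Set E}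
    (ht : t.Nonempty) (hft : ∀ z ∈ t, f z ≤ 0) (y : E) : f y ≤ ‖f‖ * infDist y t := by
  have := ht.to_subtype
  rw [infDist_eq_iInf, Real.mul_iInf_of_nonneg (norm_nonneg f)]
  refine le_ciInf fun z => ?_
  calc f y = f (y - z) + f z := by rw [map_sub]; ring
    _ ≤ ‖f‖ * dist y z + 0 := by
      rw [dist_eq_norm]; exact add_le_add ((le_abs_self _).trans (f.le_opNorm _)) (hft z z.2)
    _ = ‖f‖ * dist y z := add_zero _

theorem ContinuousLinearMap.apply_le_mul_hausdorffDist {f : StrongDual ℝ E} {s t : Set E}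
    (hs : s.Nonempty) (ht : t.Nonempty) (hsb : Bornology.IsBounded s) (htb : Bornology.IsBounded t)
    (hft : ∀ z ∈ t, f z ≤ 0) {y : E} (hy : y ∈ s) : f y ≤ ‖f‖ * hausdorffDist s t :=
  (f.apply_le_mul_infDist ht hft y).trans <| mul_le_mul_of_nonneg_left
    (infDist_le_hausdorffDist_of_mem hy
      (hausdorffEDist_ne_top_of_nonempty_of_bounded hs ht hsb htb)) (norm_nonneg f)

theorem ContinuousLinearMap.exists_apply_neg_notMem_closedBall {f : StrongDual ℝ E} (hf : f ≠ 0)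
    (R : ℝ) : ∃ y, f y < 0 ∧ y ∉ closedBall (0 : E) R := by
  obtain ⟨v, hv⟩ : ∃ v, f v < 0 := by
    obtain ⟨v, hv⟩ := DFunLike.ne_iff.1 hf
    rcases lt_or_gt_of_ne hv with h | h
    · exact ⟨v, h⟩
    · exact ⟨-v, by simpa using h⟩
  have hv0 : 0 < ‖v‖ := norm_pos_iff.2 fun h => by simp [h] at hv
  refine ⟨((|R| + 1) / ‖v‖) • v, ?_, ?_⟩
  · rw [map_smul, smul_eq_mul]
    exact mul_neg_of_pos_of_neg (by positivity) hv
  · rw [mem_closedBall, dist_zero_right, norm_smul, Real.norm_of_nonneg (by positivity),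
      div_mul_cancel₀ _ hv0.ne']
    linarith [le_abs_self R]

end Geometry

section Measure

variable {E : Type*} [NormedAddCommGroup E] [NormedSpace ℝ E] [MeasurableSpace E] [BorelSpace E]

theorem measure_setOf_apply_nonpos_eq_half [FiniteDimensional ℝ E] (μ ν : Measure E)
    [IsProbabilityMeasure μ] [μ.IsNegInvariant] [ν.IsAddHaarMeasure] (hμν : μ ≪ ν)
    {f : StrongDual ℝ E} (hf : f ≠ 0) : μ {y | f y ≤ 0} = 2⁻¹ := by
  have hker : μ {y | f y = 0} = 0 := by
    refine hμν (Measure.addHaar_submodule ν (LinearMap.ker (f : E →ₗ[ℝ] ℝ)) fun h => hf ?_)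
    exact ContinuousLinearMap.coe_injective (LinearMap.ker_eq_top.1 h)
  have hneg : Neg.neg ⁻¹' {y | f y ≤ 0} = {y | 0 ≤ f y} := by ext; simp
  have hunion : {y | f y ≤ 0} ∪ {y | 0 ≤ f y} = Set.univ := by
    ext y; simpa using le_total (f y) 0
  have hinter : {y | f y ≤ 0} ∩ {y | 0 ≤ f y} = {y | f y = 0} := by
    ext y; simpa using le_antisymm_iff.symm
  have hsum := measure_union_add_inter (μ := μ) {y | f y ≤ 0}
    (t := {y | 0 ≤ f y}) (f.measurable measurableSet_Ici)
  rw [hunion, hinter, hker, ← hneg, Measure.measure_preimage_neg, measure_univ, add_zero,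
    ← mul_two] at hsum
  exact ENNReal.eq_inv_of_mul_eq_one_left hsum.symm

theorem measure_closedBall_inter_setOf_apply_nonpos_lt (μ : Measure E) [IsFiniteMeasure μ]
    [μ.IsOpenPosMeasure] {f : StrongDual ℝ E} (hf : f ≠ 0) (R : ℝ) :
    μ (closedBall 0 R ∩ {y | f y ≤ 0}) < μ {y | f y ≤ 0} := by
  set U := {y | f y < 0} \ closedBall (0 : E) R
  have hU_open : IsOpen U := (isOpen_lt f.continuous continuous_const).sdiff isClosed_closedBall
  have hU_pos : 0 < μ U := hU_open.measure_pos μ (f.exists_apply_neg_notMem_closedBall hf R)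
  calc μ (closedBall 0 R ∩ {y | f y ≤ 0})
      < μ (closedBall 0 R ∩ {y | f y ≤ 0}) + μ U :=
        ENNReal.lt_add_right (measure_ne_top _ _) hU_pos.ne'
    _ = μ ((closedBall 0 R ∩ {y | f y ≤ 0}) ∪ U) :=
        (measure_union (Set.disjoint_sdiff_right.mono_left Set.inter_subset_left)
          hU_open.measurableSet).symm
    _ ≤ μ {y | f y ≤ 0} :=
        measure_mono <| Set.union_subset Set.inter_subset_right fun y hy =>
          (show f y < 0 from hy.1).le

theorem eventually_measure_closedBall_inter_setOf_apply_le_lt (μ : Measure E) [IsFiniteMeasure μ]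
    [μ.IsOpenPosMeasure] {f : StrongDual ℝ E} (hf : f ≠ 0) (R : ℝ) :
    ∀ᶠ r in 𝓝[>] 0, μ (closedBall 0 R ∩ {y | f y ≤ r}) < μ {y | f y ≤ 0} := by
  have hlim := tendsto_measure_biInter_gt (μ := μ) (a := (0 : ℝ))
    (s := fun r => closedBall 0 R ∩ {y | f y ≤ r})
    (fun r _ => (measurableSet_closedBall.inter (f.measurable measurableSet_Iic)).nullMeasurableSet)
    (fun r r' _ hrr' => Set.inter_subset_inter_right _ fun y hy => le_trans hy hrr')
    ⟨1, one_pos, measure_ne_top _ _⟩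
  have hinter : ⋂ r > (0 : ℝ), closedBall 0 R ∩ {y | f y ≤ r} =
      closedBall 0 R ∩ {y | f y ≤ 0} := by
    ext y
    simp only [Set.mem_iInter, Set.mem_inter_iff, Set.mem_ofPred_eq]
    exact ⟨fun h => ⟨(h 1 one_pos).1, le_of_forall_gt_imp_ge_of_dense fun r hr => (h r hr).2⟩,
      fun h r hr => ⟨h.1, h.2.trans hr.le⟩⟩
  rw [hinter] at hlim
  exact hlim.eventually_lt_const (measure_closedBall_inter_setOf_apply_nonpos_lt μ hf R)

theorem zero_mem_interior_of_tendsto_hausdorffDist [FiniteDimensional ℝ E] (μ : Measure E)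
    [IsFiniteMeasure μ] [μ.IsOpenPosMeasure] {c : ℝ≥0∞}
    (hμc : ∀ f : StrongDual ℝ E, f ≠ 0 → μ {y | f y ≤ 0} ≤ c)
    {R : ℝ} {K : ℕ → Set E} {K' : Set E} (hKR : ∀ j, K j ⊆ closedBall 0 R)
    (hμK : ∀ j, c ≤ μ (K j)) (hK' : Bornology.IsBounded K') (hK'conv : Convex ℝ K')
    (h0 : (0 : E) ∈ K') (hlim : Tendsto (fun j => hausdorffDist (K j) K') atTop (𝓝 0)) :
    (0 : E) ∈ interior K' := by
  by_contra h0int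
  obtain ⟨f, hf, hfK'⟩ := hK'conv.exists_ne_zero_forall_apply_nonpos_of_notMem_interior h0 h0int
  obtain ⟨r, hr, hr0⟩ :=
    ((eventually_measure_closedBall_inter_setOf_apply_le_lt μ hf R).and self_mem_nhdsWithin).exists
  obtain ⟨j, hj⟩ := ((hlim.const_mul ‖f‖).eventually_lt_const (by simpa using hr0)).exists
  have hKj : (K j).Nonempty := nonempty_of_measure_ne_zero <|
    (pos_of_gt ((hr.trans_le (hμc f hf)).trans_le (hμK j))).ne'
  have hsub : K j ⊆ closedBall 0 R ∩ {y | f y ≤ r} := fun y hy =>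
    ⟨hKR j hy, (f.apply_le_mul_hausdorffDist hKj ⟨0, h0⟩
      (isBounded_closedBall.subset (hKR j)) hK' hfK' hy).trans hj.le⟩
  exact ((measure_mono hsub).trans_lt (hr.trans_le (hμc f hf))).not_ge (hμK j)

end Measure

theorem MeasureTheory.Measure.isNegInvariant_withDensity {G : Type*} [MeasurableSpace G]
    [InvolutiveNeg G] [MeasurableNeg G] (μ : Measure G) [μ.IsNegInvariant] {g : G → ℝ≥0∞}
    (hg : ∀ x, g (-x) = g x) : (μ.withDensity g).IsNegInvariant := by
  refine ⟨Measure.ext fun s hs => ?_⟩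
  rw [Measure.neg_apply, withDensity_apply _ hs, withDensity_apply _ hs.neg, ← Set.neg_preimage,
    ← (Measure.measurePreserving_neg μ).setLIntegral_comp_preimage_emb
      (MeasurableEquiv.neg G).measurableEmbedding g s]
  simp only [hg]

theorem integral_exp_neg_sq_norm_div_two (V : Type*) [NormedAddCommGroup V]
    [InnerProductSpace ℝ V] [FiniteDimensional ℝ V] [MeasurableSpace V] [BorelSpace V] :
    ∫ y : V, exp (-‖y‖ ^ 2 / 2) = √(2 * π) ^ Module.finrank ℝ V := by
  have h := GaussianFourier.integral_rexp_neg_mul_sq_norm (V := V) (b := 1 / 2) (by norm_num)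
  rw [div_div_eq_mul_div, div_one, mul_comm π] at h
  rw [sqrt_eq_rpow, ← rpow_natCast, ← rpow_mul (by positivity), one_div_mul_eq_div, ← h]
  congr 1 with y
  ring_nf

noncomputable def gaussianMeasure (n : ℕ) : Measure (EuclideanSpace ℝ (Fin n)) :=
  volume.withDensity fun y => ENNReal.ofReal (1 / √(2 * π) ^ n * exp (-‖y‖ ^ 2 / 2))

section gaussianMeasure

variable {n : ℕ}

theorem gaussianMeasure_apply (K : Set (EuclideanSpace ℝ (Fin n))) :
    gaussianMeasure n K = ENNReal.ofReal (gaussianVolume K) := by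
  have hint : Integrable fun y : EuclideanSpace ℝ (Fin n) => exp (-‖y‖ ^ 2 / 2) :=
    Integrable.of_integral_ne_zero (by rw [integral_exp_neg_sq_norm_div_two]; positivity)
  rw [gaussianMeasure, withDensity_apply', gaussianVolume, ← integral_const_mul,
    ofReal_integral_eq_lintegral_ofReal (hint.const_mul _).integrableOn
      (ae_of_all _ fun y => by positivity)]

instance : IsProbabilityMeasure (gaussianMeasure n) := by
  refine ⟨?_⟩
  rw [gaussianMeasure_apply, gaussianVolume, Measure.restrict_univ,
    integral_exp_neg_sq_norm_div_two, finrank_euclideanSpace_fin,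
    one_div_mul_cancel (by positivity), ENNReal.ofReal_one]

instance : (gaussianMeasure n).IsNegInvariant :=
  Measure.isNegInvariant_withDensity volume fun y => by rw [norm_neg]

instance : (gaussianMeasure n).IsOpenPosMeasure :=
  (withDensity_absolutelyContinuous' (by fun_prop)
    (ae_of_all _ fun y => ENNReal.ofReal_pos.2 (by positivity) |>.ne')).isOpenPosMeasure

end gaussianMeasure

theorem origin_mem_interior_of_limit_general
    {n : ℕ} (R : ℝ)
    (K : ℕ → Set (EuclideanSpace ℝ (Fin n)))
    (K' : Set (EuclideanSpace ℝ (Fin n)))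
    (hKR : ∀ j, K j ⊆ Metric.closedBall (0 : EuclideanSpace ℝ (Fin n)) R)
    (hγ : ∀ j, (1 : ℝ) / 2 ≤ gaussianVolume (K j))
    (hK'c : IsCompact K') (hK'conv : Convex ℝ K')
    (h0 : (0 : EuclideanSpace ℝ (Fin n)) ∈ K')
    (hconv : Tendsto (fun j => Metric.hausdorffDist (K j) K') atTop (nhds 0)) :
    (0 : EuclideanSpace ℝ (Fin n)) ∈ interior K' := by
  refine zero_mem_interior_of_tendsto_hausdorffDist (gaussianMeasure n) (c := 2⁻¹)
    (fun f hf => (measure_setOf_apply_nonpos_eq_half (gaussianMeasure n) volume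
      (withDensity_absolutelyContinuous _ _) hf).le)
    hKR (fun j => ?_) hK'c.isBounded hK'conv h0 hconv
  simpa [gaussianMeasure_apply] using ENNReal.ofReal_le_ofReal (hγ j)

/-- If convex bodies `K_j ⊆ B_R` with `γ_n(K_j) ≥ 1/2` converge in the Hausdorff metric
to a compact convex set `K'` containing the origin, then the origin lies in the interior
of `K'`. -/
theorem origin_mem_interior_of_limit
    {n : ℕ} (R : ℝ)
    (K : ℕ → Set (EuclideanSpace ℝ (Fin n)))
    (K' : Set (EuclideanSpace ℝ (Fin n)))
    (hKc : ∀ j, IsCompact (K j)) (hKconv : ∀ j, Convex ℝ (K j))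
    (hKne : ∀ j, (K j).Nonempty)
    (hKR : ∀ j, K j ⊆ Metric.closedBall (0 : EuclideanSpace ℝ (Fin n)) R)
    (hγ : ∀ j, (1 : ℝ) / 2 ≤ gaussianVolume (K j))
    (hK'c : IsCompact K') (hK'conv : Convex ℝ K')
    (h0 : (0 : EuclideanSpace ℝ (Fin n)) ∈ K')
    (hconv : Tendsto (fun j => Metric.hausdorffDist (K j) K') atTop (nhds 0)) :
    (0 : EuclideanSpace ℝ (Fin n)) ∈ interior K' :=
  origin_mem_interior_of_limit_general R K K' hKR hγ hK'c hK'conv h0 hconv
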